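/- Let X be a real Banach space and A : X ⇉ X* a monotone operator with nonempty graph. Assume that for every z ∉ cl(conv(dom A)) one has sup_{(a,a*)∈gra A} ⟨z − a, a*⟩/‖z − a‖ = +∞. Then cl(conv(dom A)) = cl(P_X[dom F_A]). -/

import Mathlib

open Set

noncomputable section

variable {X : Type*}

/-- The domain of a set-valued operator `A : X ⇉ X*`, identified with its graph. -/
def opDom [NormedAddCommGroup X] [NormedSpace ℝ X]
    (A : Set (X × (X →L[ℝ] ℝ))) : Set X := Prod.fst '' A

/-- The range of a set-valued operator. -/
def opRan [NormedAddCommGroup X] [NormedSpace ℝ X]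
    (A : Set (X × (X →L[ℝ] ℝ))) : Set (X →L[ℝ] ℝ) := Prod.snd '' A

/-- `(x, x*)` is monotonically related to the set `S ⊆ X × X*`:
`⟨x − y, x* − y*⟩ ≥ 0` for all `(y, y*) ∈ S`. -/
def MonRel [NormedAddCommGroup X] [NormedSpace ℝ X]
    (p : X × (X →L[ℝ] ℝ)) (S : Set (X × (X →L[ℝ] ℝ))) : Prop :=
  ∀ q ∈ S, 0 ≤ (p.2 - q.2) (p.1 - q.1)

/-- `A` is a monotone operator (identified with its graph). -/
def IsMonotoneOp [NormedAddCommGroup X] [NormedSpace ℝ X]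
    (A : Set (X × (X →L[ℝ] ℝ))) : Prop :=
  ∀ p ∈ A, MonRel p A

/-- `A` is maximally monotone: it is monotone and every monotonically related
pair already belongs to the graph. -/
def IsMaxMonotoneOp [NormedAddCommGroup X] [NormedSpace ℝ X]
    (A : Set (X × (X →L[ℝ] ℝ))) : Prop :=
  IsMonotoneOp A ∧ ∀ p : X × (X →L[ℝ] ℝ), MonRel p A → p ∈ A

/-- The Fitzpatrick function of `A`, with values in `(-∞, +∞]` (modeled in `EReal`):
`F_A(x, x*) = sup_{(a,a*) ∈ A} (⟨a, x*⟩ + ⟨x, a*⟩ − ⟨a, a*⟩)`. -/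
def fitz [NormedAddCommGroup X] [NormedSpace ℝ X]
    (A : Set (X × (X →L[ℝ] ℝ))) (x : X) (x' : X →L[ℝ] ℝ) : EReal :=
  ⨆ a ∈ A, ((x' a.1 + a.2 x - a.2 a.1 : ℝ) : EReal)

/-- The domain of the Fitzpatrick function: the set of pairs where `F_A < +∞`. -/
def fitzDom [NormedAddCommGroup X] [NormedSpace ℝ X]
    (A : Set (X × (X →L[ℝ] ℝ))) : Set (X × (X →L[ℝ] ℝ)) :=
  {q | fitz A q.1 q.2 < ⊤}

/-- `J_p(x) = (1/p) ∂‖·‖^p (x)`, the subdifferential at `x` of `y ↦ ‖y‖^p / p`. -/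
def Jmap [NormedAddCommGroup X] [NormedSpace ℝ X]
    (p : ℝ) (x : X) : Set (X →L[ℝ] ℝ) :=
  {x' | ∀ y : X, x' (y - x) + ‖x‖ ^ p / p ≤ ‖y‖ ^ p / p}

/-- The graph of the operator `A + λ J_p(· − z)`. -/
def sumGraph [NormedAddCommGroup X] [NormedSpace ℝ X]
    (A : Set (X × (X →L[ℝ] ℝ))) (lam p : ℝ) (z : X) :
    Set (X × (X →L[ℝ] ℝ)) :=
  {q | ∃ a' b' : X →L[ℝ] ℝ, (q.1, a') ∈ A ∧ b' ∈ Jmap p (q.1 - z) ∧ q.2 = a' + lam • b'}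

/-! `F_A` is a supremum of affine functions, so `dom F_A` and its projection are convex, and for
monotone `A` the projection contains `dom A`; this gives `⊆`. Conversely, if `F_A(x, x*) ≤ r`,
then `⟨x − a, a*⟩ ≤ r − ⟨a, x*⟩` grows at most linearly in `‖x − a‖`, so for `x` at positive
distance from `dom A` the slopes `⟨x − a, a*⟩ / ‖x − a‖` stay bounded, and the hypothesis forces
`x ∈ cl(conv(dom A))`. -/

section Fitzpatrick

variable [NormedAddCommGroup X] [NormedSpace ℝ X] {A : Set (X × (X →L[ℝ] ℝ))}

theorem mem_fitzDom_iff {q : X × (X →L[ℝ] ℝ)} :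
    q ∈ fitzDom A ↔ ∃ r : ℝ, ∀ a ∈ A, q.2 a.1 + a.2 q.1 - a.2 a.1 ≤ r := by
  constructor
  · intro hq
    obtain ⟨r, hlt, -⟩ := EReal.exists_between_coe_real hq
    refine ⟨r, fun a ha => ?_⟩
    have hle : ((q.2 a.1 + a.2 q.1 - a.2 a.1 : ℝ) : EReal) ≤ fitz A q.1 q.2 :=
      le_iSup₂ (f := fun a (_ : a ∈ A) => ((q.2 a.1 + a.2 q.1 - a.2 a.1 : ℝ) : EReal)) a ha
    exact_mod_cast hle.trans hlt.le
  · rintro ⟨r, hr⟩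
    exact (iSup₂_le fun a ha => EReal.coe_le_coe_iff.mpr (hr a ha)).trans_lt (EReal.coe_lt_top r)

theorem IsMonotoneOp.subset_fitzDom (hmono : IsMonotoneOp A) : A ⊆ fitzDom A := by
  intro p hp
  refine mem_fitzDom_iff.mpr ⟨p.2 p.1, fun a ha => ?_⟩
  have hpa := hmono p hp a ha
  simp only [sub_apply, map_sub] at hpa
  linarith

theorem convex_fitzDom : Convex ℝ (fitzDom A) := by
  intro p hp q hq s t hs ht hst
  obtain ⟨r₁, hr₁⟩ := mem_fitzDom_iff.mp hp
  obtain ⟨r₂, hr₂⟩ := mem_fitzDom_iff.mp hq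
  refine mem_fitzDom_iff.mpr ⟨s * r₁ + t * r₂, fun a ha => ?_⟩
  have h₁ := mul_le_mul_of_nonneg_left (hr₁ a ha) hs
  have h₂ := mul_le_mul_of_nonneg_left (hr₂ a ha) ht
  have hsplit : a.2 a.1 = s * a.2 a.1 + t * a.2 a.1 := by rw [← add_mul, hst, one_mul]
  simp only [Prod.fst_add, Prod.snd_add, Prod.smul_fst, Prod.smul_snd,
    add_apply, FunLike.coe_smul, Pi.smul_apply, map_add,
    map_smul, smul_eq_mul]
  linarith

theorem convex_image_fst_fitzDom : Convex ℝ (Prod.fst '' fitzDom A) := by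
  have := (convex_fitzDom (A := A)).linear_image (LinearMap.fst ℝ X (X →L[ℝ] ℝ))
  rwa [LinearMap.coe_fst] at this

theorem exists_slope_le_of_mem_fitzDom {q : X × (X →L[ℝ] ℝ)} (hq : q ∈ fitzDom A)
    (hqA : q.1 ∉ closure (opDom A)) :
    ∃ M : ℝ, ∀ a ∈ A, a.2 (q.1 - a.1) / ‖q.1 - a.1‖ ≤ M := by
  obtain ⟨r, hr⟩ := mem_fitzDom_iff.mp hq
  obtain ⟨ε, hε, hdist⟩ : ∃ ε > 0, ∀ y ∈ opDom A, ε ≤ dist q.1 y := by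
    simpa only [Metric.mem_closure_iff, not_forall, not_exists, not_and, not_lt, exists_prop] using hqA
  set c := |r - q.2 q.1|
  refine ⟨c / ε + ‖q.2‖, fun a ha => ?_⟩
  have hε_le : ε ≤ ‖q.1 - a.1‖ := by simpa [dist_eq_norm] using hdist a.1 ⟨a, ha, rfl⟩
  have hpos : 0 < ‖q.1 - a.1‖ := hε.trans_le hε_le
  have hslope : a.2 (q.1 - a.1) ≤ c + ‖q.2‖ * ‖q.1 - a.1‖ := by
    have hfitz := hr a ha
    have hq₂ : q.2 (q.1 - a.1) ≤ ‖q.2‖ * ‖q.1 - a.1‖ :=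
      (le_abs_self _).trans (q.2.le_opNorm _)
    have hc : r - q.2 q.1 ≤ c := le_abs_self _
    simp only [map_sub] at hq₂ ⊢
    linarith
  calc a.2 (q.1 - a.1) / ‖q.1 - a.1‖
      ≤ (c + ‖q.2‖ * ‖q.1 - a.1‖) / ‖q.1 - a.1‖ := by gcongr
    _ = c / ‖q.1 - a.1‖ + ‖q.2‖ := by field_simp
    _ ≤ c / ε + ‖q.2‖ := by gcongr

end Fitzpatrick

theorem closure_convexHull_eq_of_sup_unbounded_general
    [NormedAddCommGroup X] [NormedSpace ℝ X]
    (A : Set (X × (X →L[ℝ] ℝ))) (hmono : IsMonotoneOp A)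
    (h : ∀ z ∉ closure (convexHull ℝ (opDom A)), ∀ M : ℝ,
      ∃ a ∈ A, M < a.2 (z - a.1) / ‖z - a.1‖) :
    closure (convexHull ℝ (opDom A)) = closure (Prod.fst '' fitzDom A) := by
  have hdom : opDom A ⊆ Prod.fst '' fitzDom A := image_mono hmono.subset_fitzDom
  have hproj : Prod.fst '' fitzDom A ⊆ closure (convexHull ℝ (opDom A)) := by
    rintro _ ⟨q, hq, rfl⟩
    by_contra hq₁
    obtain ⟨M, hM⟩ := exists_slope_le_of_mem_fitzDom hq
      fun hc => hq₁ (closure_mono (subset_convexHull ℝ _) hc)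
    obtain ⟨a, ha, hlt⟩ := h q.1 hq₁ M
    exact (hM a ha).not_gt hlt
  refine Subset.antisymm (closure_minimal ?_ isClosed_closure)
    (closure_minimal hproj isClosed_closure)
  exact convexHull_min (hdom.trans subset_closure) convex_image_fst_fitzDom.closure

/-- Proposition: if `A` is monotone with nonempty graph and for every
`z ∉ cl(conv(dom A))` one has `sup_{(a,a*)∈gra A} ⟨z−a, a*⟩/‖z−a‖ = +∞`, then
`cl(conv(dom A)) = cl(P_X[dom F_A])`. -/
theorem closure_convexHull_eq_of_sup_unbounded
    [NormedAddCommGroup X] [NormedSpace ℝ X] [CompleteSpace X]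
    (A : Set (X × (X →L[ℝ] ℝ))) (hne : A.Nonempty) (hmono : IsMonotoneOp A)
    (h : ∀ z ∉ closure (convexHull ℝ (opDom A)), ∀ M : ℝ,
      ∃ a ∈ A, M < a.2 (z - a.1) / ‖z - a.1‖) :
    closure (convexHull ℝ (opDom A)) = closure (Prod.fst '' fitzDom A) :=
  closure_convexHull_eq_of_sup_unbounded_general A hmono h
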